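/- arXiv:2207.03100 — 3 statements merged into one kernel-verified Lean document; each statement's English description precedes it below -/
import Mathlib

section
/- A monochromatic forest-skein category is left-cancellative if and only if it is free; equivalently, the quotient morphism from the free monochromatic forest-skein category onto a monochromatic forest-skein category has trivial kernel whenever the quotient is left-cancellative. -/
namespace ForestSkein

/-- A coloured finite rooted planar binary tree with colours in `S`. -/
inductive CTree (S : Type) : Type
  | leaf : CTree S
  | node : S → CTree S → CTree S → CTree S

namespace CTree

/-- Number of leaves of a coloured binary tree. -/
def leaves {S : Type} : CTree S → ℕ
  | .leaf => 1
  | .node _ l r => leaves l + leaves r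

/-- Graft a list of trees onto the leaves of a tree (vertical stacking). -/
def graft {S : Type} : CTree S → List (CTree S) → CTree S
  | .leaf, gs => gs.headD .leaf
  | .node c l r, gs => .node c (graft l (gs.take (leaves l))) (graft r (gs.drop (leaves l)))

/-- Relabel the colours of a tree along a map of colour sets. -/
def recolour {S S' : Type} (c : S → S') : CTree S → CTree S'
  | .leaf => .leaf
  | .node x l r => .node (c x) (recolour c l) (recolour c r)

end CTree

/-- A coloured forest: a finite list of coloured binary trees.  Its roots are the
entries of the list, its leaves are the leaves of its trees. -/
abbrev Forest (S : Type) := List (CTree S)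

/-- Total number of leaves of a forest. -/
def Forest.leaves {S : Type} (f : Forest S) : ℕ := (f.map CTree.leaves).sum

/-- Composition of forests: `Forest.comp f g` stacks `g` on top of `f`, attaching
the `j`-th root of `g` to the `j`-th leaf of `f` (meaningful when
`Forest.leaves f = g.length`). -/
def Forest.comp {S : Type} : Forest S → Forest S → Forest S
  | [], _ => []
  | t :: ts, g =>
      CTree.graft t (g.take (CTree.leaves t)) :: Forest.comp ts (g.drop (CTree.leaves t))

/-- The elementary forest `a_{j,n}` (1-indexed) with `n` roots, a single `a`-coloured
caret at the `j`-th root, and all other trees trivial. -/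
def elemForest {S : Type} (a : S) (j n : ℕ) : Forest S :=
  List.replicate (j - 1) CTree.leaf ++ [CTree.node a CTree.leaf CTree.leaf] ++
    List.replicate (n - j) CTree.leaf

/-- A set of skein relations consists of pairs of trees with equal numbers of leaves. -/
def LeafPres {S : Type} (R : CTree S → CTree S → Prop) : Prop :=
  ∀ t t' : CTree S, R t t' → CTree.leaves t = CTree.leaves t'

/-- The equivalence relation on coloured forests generated by a set `R` of skein
relations (pairs of trees), closed under composition and tensor product
(horizontal juxtaposition).  The quotient is the forest-skein category
presented by `R`. -/
inductive SkeinEquiv {S : Type} (R : CTree S → CTree S → Prop) : Forest S → Forest S → Prop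
  | of {t t' : CTree S} : R t t' → SkeinEquiv R [t] [t']
  | refl (f : Forest S) : SkeinEquiv R f f
  | symm {f g : Forest S} : SkeinEquiv R f g → SkeinEquiv R g f
  | trans {f g h : Forest S} : SkeinEquiv R f g → SkeinEquiv R g h → SkeinEquiv R f h
  | comp {f f' g g' : Forest S} :
      SkeinEquiv R f f' → SkeinEquiv R g g' → SkeinEquiv R (Forest.comp f g) (Forest.comp f' g')
  | tensor {f f' g g' : Forest S} :
      SkeinEquiv R f f' → SkeinEquiv R g g' → SkeinEquiv R (f ++ g) (f' ++ g')

/-- Left-cancellativity of a forest-skein category given by the equivalence `E` on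
forests: `f ∘ g = f ∘ h` implies `g = h`. -/
def LeftCancel {S : Type} (E : Forest S → Forest S → Prop) : Prop :=
  ∀ f g h : Forest S, Forest.leaves f = g.length → Forest.leaves f = h.length →
    E (Forest.comp f g) (Forest.comp f h) → E g h

/-- Ore's property for the forest-skein category given by the equivalence `E`:
any two forests with the same number of roots admit a common right multiple. -/
def OreProp {S : Type} (E : Forest S → Forest S → Prop) : Prop :=
  ∀ f g : Forest S, f.length = g.length →
    ∃ p q : Forest S, Forest.leaves f = p.length ∧ Forest.leaves g = q.length ∧
      E (Forest.comp f p) (Forest.comp g q)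

/-- Equality of the fractions `t ∘ s⁻¹` and `t' ∘ s'⁻¹` in the fraction group:
there are forests `f, f'` with `t ∘ f = t' ∘ f'` and `s ∘ f = s' ∘ f'` modulo `E`. -/
def FracRel {S : Type} (E : Forest S → Forest S → Prop) (t s t' s' : CTree S) : Prop :=
  ∃ f f' : Forest S, CTree.leaves t = f.length ∧ CTree.leaves t' = f'.length ∧
    E [CTree.graft t f] [CTree.graft t' f'] ∧ E [CTree.graft s f] [CTree.graft s' f']

/-!
A skein relation between trees with equally many leaves preserves the number of leaves above
each root, so equivalent forests have the same leaf profile. With a single colour, two forests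
with the same profile are either equal or both of the form `e ∘ f'`, `e ∘ g'` with `e` an
elementary forest (one caret). Left cancellation gives `f' ∼ g'`, and `f'` has fewer carets, so
induction on the number of carets shows that equivalent forests are equal. Conversely, grafting
is injective, so the free category is left-cancellative.
-/

section General

variable {S : Type}

def CTree.carets : CTree S → ℕ
  | .leaf => 0
  | .node _ l r => carets l + carets r + 1

def Forest.carets (f : Forest S) : ℕ := (f.map CTree.carets).sum

namespace CTree

lemma one_le_leaves (t : CTree S) : 1 ≤ t.leaves := by
  induction t with
  | leaf => rfl
  | node _ l r _ _ => simp only [leaves]; omega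

lemma leaves_node_ne_one (a : S) (l r : CTree S) : (node a l r).leaves ≠ 1 := by
  have := l.one_le_leaves
  have := r.one_le_leaves
  simp only [leaves]
  omega

/-- Leaves of `t` left without an input stay leaves, hence the truncated subtraction. -/
lemma leaves_graft (t : CTree S) (gs : List (CTree S)) :
    (t.graft gs).leaves = ((gs.take t.leaves).map leaves).sum + (t.leaves - gs.length) := by
  induction t generalizing gs with
  | leaf => cases gs <;> simp [graft, leaves]
  | node _ l r ihl ihr =>
    simp only [graft, leaves, ihl, ihr, List.take_take, min_self, List.take_add, List.map_append,
      List.sum_append, List.length_take, List.length_drop]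
    omega

lemma eq_of_graft_eq (t : CTree S) {gs hs : List (CTree S)} (hg : gs.length = t.leaves)
    (hh : hs.length = t.leaves) (h : t.graft gs = t.graft hs) : gs = hs := by
  induction t generalizing gs hs with
  | leaf =>
    match gs, hs, hg, hh with
    | [_], [_], _, _ => simpa [graft] using h
  | node _ l r ihl ihr =>
    simp only [graft, node.injEq] at h
    simp only [leaves] at hg hh
    rw [← List.take_append_drop l.leaves gs, ← List.take_append_drop l.leaves hs,
      ihl (by rw [List.length_take]; omega) (by rw [List.length_take]; omega) h.2.1,
      ihr (by rw [List.length_drop]; omega) (by rw [List.length_drop]; omega) h.2.2]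

end CTree

namespace Forest

@[simp]
lemma leaves_cons (t : CTree S) (ts : Forest S) : leaves (t :: ts) = t.leaves + leaves ts := by
  simp [leaves]

@[simp]
lemma carets_cons (t : CTree S) (ts : Forest S) : carets (t :: ts) = t.carets + carets ts := by
  simp [carets]

@[simp]
lemma leaves_replicate_leaf (n : ℕ) : leaves (List.replicate n (.leaf : CTree S)) = n := by
  simp [leaves, CTree.leaves]

lemma map_leaves_comp_congr {f f' g g' : Forest S}
    (hf : f.map CTree.leaves = f'.map CTree.leaves)
    (hg : g.map CTree.leaves = g'.map CTree.leaves) :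
    (comp f g).map CTree.leaves = (comp f' g').map CTree.leaves := by
  induction f generalizing f' g g' with
  | nil => cases f' <;> simp_all [comp]
  | cons t ts ih =>
    cases f' with
    | nil => simp at hf
    | cons t' ts' =>
      simp only [List.map_cons, List.cons.injEq] at hf
      have hlen : g.length = g'.length := by simpa using congrArg List.length hg
      simp only [comp, List.map_cons, List.cons.injEq, CTree.leaves_graft, hf.1, List.map_take,
        hg, List.length_take, hlen, true_and]
      exact ih hf.2 (by rw [List.map_drop, List.map_drop, hg])

lemma eq_of_comp_eq (f : Forest S) {g h : Forest S} (hg : leaves f = g.length)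
    (hh : leaves f = h.length) (heq : comp f g = comp f h) : g = h := by
  induction f generalizing g h with
  | nil =>
    simp only [leaves, List.map_nil, List.sum_nil] at hg hh
    rw [List.eq_nil_of_length_eq_zero hg.symm, List.eq_nil_of_length_eq_zero hh.symm]
  | cons t ts ih =>
    simp only [leaves_cons] at hg hh
    simp only [comp, List.cons.injEq] at heq
    rw [← List.take_append_drop t.leaves g, ← List.take_append_drop t.leaves h,
      t.eq_of_graft_eq (by rw [List.length_take]; omega) (by rw [List.length_take]; omega) heq.1,
      ih (by rw [List.length_drop]; omega) (by rw [List.length_drop]; omega) heq.2]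

lemma comp_leaf_cons (e f : Forest S) (x : CTree S) :
    comp (.leaf :: e) (x :: f) = x :: comp e f := by
  simp [comp, CTree.leaves, CTree.graft]

lemma comp_replicate_leaf (g : Forest S) : comp (List.replicate g.length .leaf) g = g := by
  induction g with
  | nil => rfl
  | cons x xs ih => rw [List.length_cons, List.replicate_succ, comp_leaf_cons, ih]

lemma comp_caret_cons (a : S) (l r : CTree S) (ts : Forest S) :
    comp (.node a .leaf .leaf :: List.replicate ts.length .leaf) (l :: r :: ts) =
      .node a l r :: ts := by
  simp [comp, CTree.leaves, CTree.graft, comp_replicate_leaf]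

end Forest

lemma SkeinEquiv.map_leaves_eq {R : CTree S → CTree S → Prop} (hR : LeafPres R)
    {f g : Forest S} (h : SkeinEquiv R f g) : f.map CTree.leaves = g.map CTree.leaves := by
  induction h with
  | of h => simp [hR _ _ h]
  | refl f => rfl
  | symm _ ih => exact ih.symm
  | trans _ _ ih₁ ih₂ => exact ih₁.trans ih₂
  | comp _ _ ih₁ ih₂ => exact Forest.map_leaves_comp_congr ih₁ ih₂
  | tensor _ _ ih₁ ih₂ => simp only [List.map_append, ih₁, ih₂]

lemma leftCancel_of_free {R : CTree S → CTree S → Prop}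
    (hfree : ∀ f g : Forest S, SkeinEquiv R f g → f = g) : LeftCancel (SkeinEquiv R) := by
  intro f g h hg hh hE
  rw [f.eq_of_comp_eq hg hh (hfree _ _ hE)]
  exact .refl h

end General

/-- With a single colour, two trees with the same number `≥ 2` of leaves both start with the
root caret. -/
lemma Forest.eq_or_exists_comp_eq_comp_of_map_leaves_eq (f g : Forest Unit)
    (h : f.map CTree.leaves = g.map CTree.leaves) :
    f = g ∨ ∃ e f' g' : Forest Unit, leaves e = f'.length ∧ leaves e = g'.length ∧
      comp e f' = f ∧ comp e g' = g ∧ carets f' < carets f := by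
  induction f generalizing g with
  | nil => exact .inl (List.map_eq_nil_iff.mp h.symm).symm
  | cons t ts ih =>
    obtain _ | ⟨s, ss⟩ := g
    · simp at h
    simp only [List.map_cons, List.cons.injEq] at h
    obtain ⟨hts, hss⟩ := h
    rcases t with _ | ⟨⟨⟩, l, r⟩ <;> rcases s with _ | ⟨⟨⟩, l', r'⟩
    · obtain rfl | ⟨e, f', g', hf', hg', rfl, rfl, hlt⟩ := ih ss hss
      · exact .inl rfl
      refine .inr ⟨.leaf :: e, .leaf :: f', .leaf :: g', ?_, ?_, comp_leaf_cons ..,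
        comp_leaf_cons .., by simpa [CTree.carets]⟩ <;>
        simp only [leaves_cons, CTree.leaves, List.length_cons] <;> omega
    · exact absurd hts.symm (CTree.leaves_node_ne_one _ _ _)
    · exact absurd hts (CTree.leaves_node_ne_one _ _ _)
    · have hlen : ss.length = ts.length := by simpa using (congrArg List.length hss).symm
      refine .inr ⟨.node () .leaf .leaf :: List.replicate ts.length .leaf, l :: r :: ts,
        l' :: r' :: ss, ?_, ?_, comp_caret_cons _ _ _ _, ?_, ?_⟩
      · simp only [leaves_cons, leaves_replicate_leaf, CTree.leaves, List.length_cons]; omega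
      · simp only [leaves_cons, leaves_replicate_leaf, CTree.leaves, List.length_cons]; omega
      · rw [← hlen, comp_caret_cons]
      · simp only [carets_cons, CTree.carets]; omega

theorem eq_of_skeinEquiv_of_leftCancel {R : CTree Unit → CTree Unit → Prop} (hR : LeafPres R)
    (hlc : LeftCancel (SkeinEquiv R)) {f g : Forest Unit} (h : SkeinEquiv R f g) : f = g := by
  obtain rfl | ⟨e, f', g', hf', hg', rfl, rfl, _⟩ :=
    f.eq_or_exists_comp_eq_comp_of_map_leaves_eq g (h.map_leaves_eq hR)
  · rfl
  · rw [eq_of_skeinEquiv_of_leftCancel hR hlc (hlc e f' g' hf' hg' h)]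
termination_by f.carets

/-- A monochromatic forest-skein category is left-cancellative if and
only if it is free, i.e. iff the quotient morphism from the free monochromatic
forest-skein category has trivial kernel. -/
theorem monochromatic_leftCancel_iff_free
    (R : CTree Unit → CTree Unit → Prop) (hR : LeafPres R) :
    LeftCancel (SkeinEquiv R) ↔ ∀ f g : Forest Unit, SkeinEquiv R f g → f = g :=
  ⟨fun hlc _ _ => eq_of_skeinEquiv_of_leftCancel hR hlc, leftCancel_of_free⟩

end ForestSkein
end

section
/- A forest-skein category F is left-cancellative if and only if for every tree s of F with exactly two leaves, the left-multiplication map g ↦ s∘g is injective on composable forests. -/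
namespace ForestSkein

section Aux

variable {S : Type} {R : CTree S → CTree S → Prop}

/-- Pointwise tree equivalence together with leaf-count equality. -/
def TEq (R : CTree S → CTree S → Prop) (t t' : CTree S) : Prop :=
  SkeinEquiv R [t] [t'] ∧ t.leaves = t'.leaves

lemma forall₂_tEq_refl (f : Forest S) : List.Forall₂ (TEq R) f f := by
  induction f with
  | nil => exact .nil
  | cons t ts ih => exact .cons ⟨.refl _, rfl⟩ ih

lemma forall₂_tEq_symm {f g : Forest S} (h : List.Forall₂ (TEq R) f g) :
    List.Forall₂ (TEq R) g f := by
  induction h with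
  | nil => exact .nil
  | cons h _ ih => exact .cons ⟨h.1.symm, h.2.symm⟩ ih

lemma forall₂_tEq_trans {f g h : Forest S} (h1 : List.Forall₂ (TEq R) f g)
    (h2 : List.Forall₂ (TEq R) g h) : List.Forall₂ (TEq R) f h := by
  induction h1 generalizing h with
  | nil => cases h2; exact .nil
  | cons ha _ ih =>
      cases h2 with
      | cons hb hl => exact .cons ⟨ha.1.trans hb.1, ha.2.trans hb.2⟩ (ih hl)

lemma forall₂_tEq_append {f f' g g' : Forest S} (h1 : List.Forall₂ (TEq R) f f')
    (h2 : List.Forall₂ (TEq R) g g') : List.Forall₂ (TEq R) (f ++ g) (f' ++ g') := by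
  induction h1 with
  | nil => exact h2
  | cons ha _ ih => exact .cons ha ih

lemma forall₂_take {α β : Type*} {r : α → β → Prop} {l : List α} {l' : List β}
    (h : List.Forall₂ r l l') (n : ℕ) : List.Forall₂ r (l.take n) (l'.take n) := by
  induction h generalizing n with
  | nil => simp
  | cons ha _ ih =>
      cases n with
      | zero => simp
      | succ n => exact .cons ha (ih n)

lemma forall₂_drop {α β : Type*} {r : α → β → Prop} {l : List α} {l' : List β}
    (h : List.Forall₂ r l l') (n : ℕ) : List.Forall₂ r (l.drop n) (l'.drop n) := by
  induction h generalizing n with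
  | nil => simp
  | cons ha hl ih =>
      cases n with
      | zero => exact .cons ha hl
      | succ n => exact ih n

lemma forall₂_tEq_to_skein {f g : Forest S} (h : List.Forall₂ (TEq R) f g) :
    SkeinEquiv R f g := by
  induction h with
  | nil => exact .refl []
  | @cons a b l l' ha _ ih =>
      have := SkeinEquiv.tensor ha.1 ih
      simpa using this

lemma forall₂_tEq_leaves {f g : Forest S} (h : List.Forall₂ (TEq R) f g) :
    Forest.leaves f = Forest.leaves g := by
  induction h with
  | nil => rfl
  | cons ha _ ih =>
      have h2 := ha.2
      simp only [Forest.leaves, List.map_cons, List.sum_cons] at *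
      omega

lemma Forest.leaves_append (f g : Forest S) :
    Forest.leaves (f ++ g) = Forest.leaves f + Forest.leaves g := by
  simp [Forest.leaves]

lemma leaves_graft (t : CTree S) (gs : Forest S) :
    (CTree.graft t gs).leaves =
      Forest.leaves (gs.take t.leaves) + (t.leaves - gs.length) := by
  induction t generalizing gs with
  | leaf => cases gs <;> simp [CTree.graft, CTree.leaves, Forest.leaves]
  | node c l r ihl ihr =>
      simp only [CTree.graft, CTree.leaves]
      rw [ihl, ihr, List.take_take, Nat.min_self, List.take_add, Forest.leaves_append]
      simp only [List.length_take, List.length_drop]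
      omega

lemma comp_singleton (t : CTree S) (gs : Forest S) (h : gs.length ≤ t.leaves) :
    Forest.comp [t] gs = [CTree.graft t gs] := by
  simp [Forest.comp, List.take_of_length_le h]

lemma forall₂_tEq_comp {f f' g g' : Forest S}
    (hf : List.Forall₂ (TEq R) f f') (hg : List.Forall₂ (TEq R) g g') :
    List.Forall₂ (TEq R) (Forest.comp f g) (Forest.comp f' g') := by
  induction hf generalizing g g' with
  | nil => exact .nil
  | @cons t t' ts ts' ht hts ih =>
      simp only [Forest.comp]
      rw [← ht.2]
      refine List.Forall₂.cons ⟨?_, ?_⟩ (ih (forall₂_drop hg t.leaves))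
      · rw [← comp_singleton t (g.take t.leaves)
            (by simpa using Nat.min_le_left _ _),
          ← comp_singleton t' (g'.take t.leaves)
            (by rw [← ht.2]; simpa using Nat.min_le_left _ _)]
        exact SkeinEquiv.comp ht.1 (forall₂_tEq_to_skein (forall₂_take hg t.leaves))
      · rw [leaves_graft, leaves_graft, List.take_take, List.take_take, ← ht.2,
          Nat.min_self, forall₂_tEq_leaves (forall₂_take hg t.leaves)]
        simp [hg.length_eq]

theorem skein_to_forall₂ (hR : LeafPres R) {f g : Forest S} (h : SkeinEquiv R f g) :
    List.Forall₂ (TEq R) f g := by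
  induction h with
  | of h => exact .cons ⟨.of h, hR _ _ h⟩ .nil
  | refl f => exact forall₂_tEq_refl f
  | symm _ ih => exact forall₂_tEq_symm ih
  | trans _ _ ih1 ih2 => exact forall₂_tEq_trans ih1 ih2
  | comp _ _ ih1 ih2 => exact forall₂_tEq_comp ih1 ih2
  | tensor _ _ ih1 ih2 => exact forall₂_tEq_append ih1 ih2

lemma tree_cancel (hR : LeafPres R)
    (H2 : ∀ t : CTree S, CTree.leaves t = 2 →
        ∀ g h : Forest S, g.length = 2 → h.length = 2 →
          SkeinEquiv R (Forest.comp [t] g) (Forest.comp [t] h) → SkeinEquiv R g h)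
    (t : CTree S) : ∀ g h : Forest S,
    t.leaves = g.length → t.leaves = h.length →
    SkeinEquiv R (Forest.comp [t] g) (Forest.comp [t] h) → SkeinEquiv R g h := by
  induction t with
  | leaf =>
      intro g h hg hh he
      obtain ⟨x, rfl⟩ := List.length_eq_one_iff.1 hg.symm
      obtain ⟨y, rfl⟩ := List.length_eq_one_iff.1 hh.symm
      simpa [Forest.comp, CTree.graft, CTree.leaves] using he
  | node a l r ihl ihr =>
      intro g h hg hh he
      simp only [CTree.leaves] at hg hh
      have hcomp : ∀ (u : Forest S), l.leaves + r.leaves = u.length →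
          Forest.comp [CTree.node a l r] u =
          Forest.comp [CTree.node a CTree.leaf CTree.leaf]
            [CTree.graft l (u.take l.leaves), CTree.graft r (u.drop l.leaves)] := by
        intro u hu
        rw [comp_singleton _ _ (by simp [CTree.leaves]; omega),
          comp_singleton _ _ (by simp [CTree.leaves])]
        simp [CTree.graft, CTree.leaves]
      rw [hcomp g hg, hcomp h hh] at he
      have h2 := H2 (CTree.node a CTree.leaf CTree.leaf) (by simp [CTree.leaves])
        _ _ (by simp) (by simp) he
      have hf := skein_to_forall₂ hR h2
      rcases hf with _ | ⟨h1, hf⟩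
      rcases hf with _ | ⟨h2', _⟩
      have e1 : SkeinEquiv R (g.take l.leaves) (h.take l.leaves) := by
        apply ihl _ _ (by simp; omega) (by simp; omega)
        rw [comp_singleton _ _ (by simpa using Nat.min_le_left _ _),
          comp_singleton _ _ (by simpa using Nat.min_le_left _ _)]
        exact h1.1
      have e2 : SkeinEquiv R (g.drop l.leaves) (h.drop l.leaves) := by
        apply ihr _ _ (by simp; omega) (by simp; omega)
        rw [comp_singleton _ _ (by simp; omega),
          comp_singleton _ _ (by simp; omega)]
        exact h2'.1
      have := SkeinEquiv.tensor e1 e2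
      rwa [List.take_append_drop, List.take_append_drop] at this

end Aux

/-- a forest-skein category is left-cancellative if and only if
left multiplication by every tree with exactly two leaves is injective. -/
theorem leftCancel_iff_two_leaf_trees
    {S : Type} (R : CTree S → CTree S → Prop) (hR : LeafPres R) :
    LeftCancel (SkeinEquiv R) ↔
      ∀ t : CTree S, CTree.leaves t = 2 →
        ∀ g h : Forest S, g.length = 2 → h.length = 2 →
          SkeinEquiv R (Forest.comp [t] g) (Forest.comp [t] h) → SkeinEquiv R g h := by
  constructor
  · intro LC t ht g h hg hh he
    exact LC [t] g h (by simp [Forest.leaves, ht, hg]) (by simp [Forest.leaves, ht, hh]) he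
  · intro H2 f
    induction f with
    | nil =>
        intro g h hg hh _
        simp only [Forest.leaves, List.map_nil, List.sum_nil] at hg hh
        rw [List.length_eq_zero_iff.1 hg.symm, List.length_eq_zero_iff.1 hh.symm]
        exact .refl []
    | cons t ts ih =>
        intro g h hg hh he
        simp only [Forest.leaves, List.map_cons, List.sum_cons] at hg hh
        have hf := skein_to_forall₂ hR he
        simp only [Forest.comp] at hf
        rcases hf with _ | ⟨h1, hf⟩
        have e1 : SkeinEquiv R (g.take t.leaves) (h.take t.leaves) := by
          apply tree_cancel hR H2 t _ _ (by simp; omega) (by simp; omega)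
          rw [comp_singleton _ _ (by simpa using Nat.min_le_left _ _),
            comp_singleton _ _ (by simpa using Nat.min_le_left _ _)]
          exact h1.1
        have e2 : SkeinEquiv R (g.drop t.leaves) (h.drop t.leaves) := by
          apply ih _ _ (by simp [Forest.leaves]; omega) (by simp [Forest.leaves]; omega)
          exact forall₂_tEq_to_skein hf
        have := SkeinEquiv.tensor e1 e2
        rwa [List.take_append_drop, List.take_append_drop] at this

end ForestSkein
end

section
/- Let t be a nontrivial finite rooted planar binary tree and define t_1 = t and t_{n+1} = t_n ∘ f_n where f_n attaches a copy of t to every leaf of t_n. Then for every finite rooted planar binary tree s there exists n with s ≤ t_n (s is a rooted subtree of t_n); i.e. the sequence (t_n) is cofinal in the poset of monochromatic binary trees ordered by rooted-subtree inclusion. -/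
namespace ForestSkein

/-- `titer t n` is the tree `t_{n+1}`: `t_1 = t` and `t_{n+1}` is obtained by
attaching a copy of `t` to every leaf of `t_n`. -/
def titer {S : Type} (t : CTree S) : ℕ → CTree S
  | 0 => t
  | n + 1 => CTree.graft (titer t n) (List.replicate (CTree.leaves (titer t n)) t)
/-!
The tree `t_n` contains the complete binary tree of depth `n`: since `t` has a caret at its
root, grafting `t` onto every leaf of a tree containing the complete tree of depth `n` gives a
tree containing the complete tree of depth `n + 1`. Every tree `s` lies in the complete tree of
depth `height s`, hence in `t_{height s}`.
-/

namespace CTree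

variable {S : Type}

/-- `RootedSubtree s z` is the order `s ≤ z` of the statement: `z = s ∘ f` for some forest `f`
(see `RootedSubtree.exists_graft`). -/
inductive RootedSubtree : CTree S → CTree S → Prop
  | leaf (z : CTree S) : RootedSubtree .leaf z
  | node (c : S) {l r l' r' : CTree S} :
      RootedSubtree l l' → RootedSubtree r r' → RootedSubtree (.node c l r) (.node c l' r')

theorem RootedSubtree.trans {x y z : CTree S} (hxy : RootedSubtree x y)
    (hyz : RootedSubtree y z) : RootedSubtree x z := by
  induction hxy generalizing z with
  | leaf => exact .leaf z
  | node c _ _ ihl ihr =>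
    cases hyz with
    | node _ hl hr => exact .node c (ihl hl) (ihr hr)

theorem RootedSubtree.exists_graft {s z : CTree S} (h : RootedSubtree s z) :
    ∃ f : Forest S, s.leaves = f.length ∧ s.graft f = z := by
  induction h with
  | leaf z => exact ⟨[z], rfl, rfl⟩
  | node c _ _ ihl ihr =>
    obtain ⟨f₁, hf₁, rfl⟩ := ihl
    obtain ⟨f₂, hf₂, rfl⟩ := ihr
    refine ⟨f₁ ++ f₂, by simp [leaves, hf₁, hf₂], ?_⟩
    simp only [graft, hf₁, List.take_left, List.drop_left]

theorem graft_node_replicate (c : S) (l r t : CTree S) :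
    (node c l r).graft (List.replicate (node c l r).leaves t) =
      node c (l.graft (List.replicate l.leaves t)) (r.graft (List.replicate r.leaves t)) := by
  simp [graft, leaves, List.take_replicate, List.drop_replicate]

theorem graft_replicate_ne_leaf {t : CTree S} (ht : t ≠ leaf) (z : CTree S) :
    z.graft (List.replicate z.leaves t) ≠ leaf := by
  cases z with
  | leaf => simpa [graft, leaves] using ht
  | node => simp [graft]

def height : CTree S → ℕ
  | leaf => 0
  | node _ l r => max l.height r.height + 1

def sprout : CTree Unit → CTree Unit
  | leaf => node () leaf leaf
  | node _ l r => node () l.sprout r.sprout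

def complete : ℕ → CTree Unit
  | 0 => leaf
  | d + 1 => node () (complete d) (complete d)

theorem sprout_complete (d : ℕ) : (complete d).sprout = complete (d + 1) := by
  induction d with
  | zero => rfl
  | succ d ih => simp only [complete, sprout, ih]

theorem rootedSubtree_complete_of_height_le {s : CTree Unit} {d : ℕ} (h : s.height ≤ d) :
    RootedSubtree s (complete d) := by
  induction s generalizing d with
  | leaf => exact .leaf _
  | node _ l r ihl ihr =>
    cases d with
    | zero => simp [height] at h
    | succ d =>
      simp only [height, Nat.add_le_add_iff_right, max_le_iff] at h
      exact .node () (ihl h.1) (ihr h.2)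

theorem caret_rootedSubtree_of_ne_leaf {z : CTree Unit} (hz : z ≠ leaf) :
    RootedSubtree (node () leaf leaf) z := by
  cases z with
  | leaf => exact absurd rfl hz
  | node => exact .node () (.leaf _) (.leaf _)

theorem RootedSubtree.sprout_graft_replicate {t s z : CTree Unit} (ht : t ≠ .leaf)
    (h : RootedSubtree s z) : RootedSubtree s.sprout (z.graft (List.replicate z.leaves t)) := by
  induction h with
  | leaf z => exact caret_rootedSubtree_of_ne_leaf (graft_replicate_ne_leaf ht z)
  | node _ _ _ ihl ihr =>
    rw [graft_node_replicate]
    exact .node () ihl ihr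

theorem rootedSubtree_complete_titer {t : CTree Unit} (ht : t ≠ leaf) (n : ℕ) :
    RootedSubtree (complete n) (titer t n) := by
  induction n with
  | zero => exact .leaf t
  | succ n ih =>
    rw [← sprout_complete]
    exact ih.sprout_graft_replicate ht

end CTree

/-- for a nontrivial monochromatic binary tree `t`, the sequence
`(t_n)` is increasing and cofinal in the poset of monochromatic binary trees
ordered by rooted-subtree inclusion (`s ≤ z` iff `z = s ∘ f` for some forest `f`). -/
theorem titer_cofinal (t : CTree Unit) (ht : t ≠ CTree.leaf) :
    (∀ n : ℕ, ∃ f : Forest Unit, CTree.leaves (titer t n) = f.length ∧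
        CTree.graft (titer t n) f = titer t (n + 1))
    ∧ ∀ s : CTree Unit, ∃ (n : ℕ) (f : Forest Unit),
        CTree.leaves s = f.length ∧ CTree.graft s f = titer t n := by
  refine ⟨fun n => ⟨_, (List.length_replicate ..).symm, rfl⟩, fun s => ?_⟩
  have hs : CTree.RootedSubtree s (titer t s.height) :=
    (CTree.rootedSubtree_complete_of_height_le le_rfl).trans
      (CTree.rootedSubtree_complete_titer ht _)
  exact ⟨s.height, hs.exists_graft⟩

end ForestSkein
end
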